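/- arXiv:2503.15972 — 5 statements merged into one kernel-verified Lean document; each statement's English description precedes it below -/
import Mathlib

section
/- Let ρ be a symmetric positive definite real matrix indexed by {1,…,d+1} with unit diagonal, let j* ∈ {1,…,d+1} and let τ be an integer with 1 ≤ τ ≤ d+1−j*. Assume that for every j ∈ {2,…,d+1−τ} and every k ∈ {1,…,j−1}, ρ_{kj} = ρ_{S_j,k}ᵀ ρ_{S_j,S_j}⁻¹ ρ_{S_j,j}, where S_j = {j+1,…,d+1} (i.e., all partial correlations ρ_{kj·S_j} of pairs appearing in trees τ+1,…,d of the C-vine with variable order 1,…,d+1 vanish). Let β = ρ_{−j*,−j*}⁻¹ ρ_{−j*,j*}, whose entries are indexed by the variables in {1,…,d+1}\{j*} in increasing order. Then the entries of β indexed by variables in {1,…,d+1−τ}\{j*} are all zero, and the subvector of β indexed by the variables in T = {d+2−τ,…,d+1} equals ρ_{T,T}⁻¹ ρ_{T,j*}. -/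
open Matrix

/-- The algebraic truncation condition of a Gaussian C-vine at level `τ` with variable order
`1,…,d+1` (variables are indexed by `Fin (d+1)`, index `i` standing for variable `i+1`):
for every `j ∈ {2,…,d+1−τ}` and every `k ∈ {1,…,j−1}`,
`ρ_{kj} = ρ_{S_j,k}ᵀ ρ_{S_j,S_j}⁻¹ ρ_{S_j,j}` where `S_j = {j+1,…,d+1}`
(i.e., all partial correlations of pairs appearing in trees `τ+1,…,d` vanish). -/
def TruncCond (d τ : ℕ) (ρ : Matrix (Fin (d+1)) (Fin (d+1)) ℝ) : Prop :=
  ∀ j : Fin (d+1), 1 ≤ (j : ℕ) → (j : ℕ) + τ ≤ d →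
    ∀ k : Fin (d+1), (k : ℕ) < (j : ℕ) →
      ρ k j =
        (fun a : {l : Fin (d+1) // (j : ℕ) < (l : ℕ)} => ρ a.1 k) ⬝ᵥ
          ((ρ.submatrix (fun a : {l : Fin (d+1) // (j : ℕ) < (l : ℕ)} => a.1)
              (fun a : {l : Fin (d+1) // (j : ℕ) < (l : ℕ)} => a.1))⁻¹).mulVec
            (fun a => ρ a.1 j)


lemma sum_subtype_eq_sum {n : ℕ} {Q : Fin n → Prop} [DecidablePred Q]
    (F : Fin n → ℝ) (hF : ∀ a, ¬ Q a → F a = 0) :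
    ∑ a : {l : Fin n // Q l}, F a.1 = ∑ i, F i := by
  rw [← Finset.sum_subtype (Finset.univ.filter Q) (by simp) F]
  exact Finset.sum_subset (Finset.filter_subset _ _)
    (fun x _ hx => hF x (by simpa using hx))

lemma sum_subtype_congr {n : ℕ} {P Q : Fin n → Prop} [DecidablePred P] [DecidablePred Q]
    (hQP : ∀ a, Q a → P a) (F : Fin n → ℝ) (hF : ∀ a, ¬ Q a → F a = 0) :
    ∑ a : {l : Fin n // P l}, F a.1 = ∑ a : {l : Fin n // Q l}, F a.1 := by
  rw [← Finset.sum_subtype (Finset.univ.filter P) (by simp) F,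
      ← Finset.sum_subtype (Finset.univ.filter Q) (by simp) F]
  exact (Finset.sum_subset (by intro x hx; simp at hx ⊢; exact hQP x hx)
    (fun x _ hx => hF x (by simpa using hx))).symm

lemma posDef_submatrix' {n : ℕ} {M : Matrix (Fin n) (Fin n) ℝ} (hM : M.PosDef)
    (P : Fin n → Prop) [DecidablePred P] :
    (M.submatrix (fun a : {l : Fin n // P l} => a.1)
      (fun a : {l : Fin n // P l} => a.1)).PosDef := by
  refine Matrix.PosDef.of_dotProduct_mulVec_pos ?_ ?_
  · exact hM.1.submatrix _
  · intro x hx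
    set y : Fin n → ℝ := fun i => if h : P i then x ⟨i, h⟩ else 0 with hy
    have hy0 : y ≠ 0 := fun h0 => hx (funext fun a => by
      have := congrFun h0 a.1
      simpa [hy, a.2] using this)
    have e1 : dotProduct (star x)
        ((M.submatrix (fun a : {l : Fin n // P l} => a.1)
          (fun a : {l : Fin n // P l} => a.1)) *ᵥ x) = dotProduct (star y) (M *ᵥ y) := by
      simp only [star_trivial, dotProduct, Matrix.mulVec, Matrix.submatrix_apply]
      rw [← sum_subtype_eq_sum (Q := P) (fun i => y i * ∑ j, M i j * y j)
        (fun a ha => by simp [hy, ha])]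
      refine Finset.sum_congr rfl fun a _ => ?_
      have hxy : x a = y a.1 := by simp [hy, a.2]
      rw [hxy]
      congr 1
      rw [← sum_subtype_eq_sum (Q := P) (fun j => M a.1 j * y j)
        (fun b hb => by simp [hy, hb])]
      exact Finset.sum_congr rfl fun b _ => by simp [hy, b.2]
    rw [e1]
    exact hM.dotProduct_mulVec_pos hy0

lemma mulVec_cancel {m : Type*} [Fintype m] [DecidableEq m] {A : Matrix m m ℝ}
    (hA : IsUnit A.det) {x b : m → ℝ} (h : A *ᵥ x = b) : A⁻¹ *ᵥ b = x := by
  rw [← h, Matrix.mulVec_mulVec, Matrix.nonsing_inv_mul _ hA, Matrix.one_mulVec]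

lemma dot_inv_symm {m : Type*} [Fintype m] [DecidableEq m] {A : Matrix m m ℝ}
    (hA : Aᵀ = A) (v w : m → ℝ) : v ⬝ᵥ (A⁻¹ *ᵥ w) = w ⬝ᵥ (A⁻¹ *ᵥ v) := by
  have hAi : (A⁻¹)ᵀ = A⁻¹ := by rw [Matrix.transpose_nonsing_inv, hA]
  rw [Matrix.dotProduct_mulVec, ← hAi, Matrix.vecMul_transpose, dotProduct_comm, hAi]

lemma keyL (d τ : ℕ) (ρ : Matrix (Fin (d+1)) (Fin (d+1)) ℝ) (hρ : ρ.PosDef)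
    (htrunc : TruncCond d τ ρ) (j : Fin (d+1)) (hj1 : 1 ≤ (j:ℕ)) (hj2 : (j:ℕ) + τ ≤ d)
    (k : Fin (d+1)) (hk : (k:ℕ) < (j:ℕ)) :
    ρ k j = (fun a : {l : Fin (d+1) // d + 1 ≤ (l:ℕ) + τ} => ρ a.1 k) ⬝ᵥ
      (((ρ.submatrix (fun a : {l : Fin (d+1) // d + 1 ≤ (l:ℕ) + τ} => a.1)
          (fun a : {l : Fin (d+1) // d + 1 ≤ (l:ℕ) + τ} => a.1))⁻¹) *ᵥ
        (fun a => ρ a.1 j)) := by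
  have hs : ∀ a b, ρ a b = ρ b a := by
    intro a b
    conv_lhs => rw [← hρ.1]
    simp [Matrix.conjTranspose_apply]
  have hA : (ρ.submatrix (fun a : {l : Fin (d+1) // d + 1 ≤ (l:ℕ) + τ} => a.1)
      (fun a : {l : Fin (d+1) // d + 1 ≤ (l:ℕ) + τ} => a.1)).PosDef :=
    posDef_submatrix' hρ _
  have hAdet := hA.det_pos.ne'.isUnit
  have hAsymm : (ρ.submatrix (fun a : {l : Fin (d+1) // d + 1 ≤ (l:ℕ) + τ} => a.1)
      (fun a : {l : Fin (d+1) // d + 1 ≤ (l:ℕ) + τ} => a.1))ᵀ =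
      ρ.submatrix (fun a : {l : Fin (d+1) // d + 1 ≤ (l:ℕ) + τ} => a.1)
        (fun a : {l : Fin (d+1) // d + 1 ≤ (l:ℕ) + τ} => a.1) := by
    ext a b; simp [hs a.1 b.1]
  -- strong downward induction on j
  suffices H : ∀ n : ℕ, ∀ j : Fin (d+1), d - (j:ℕ) = n → 1 ≤ (j:ℕ) → (j:ℕ) + τ ≤ d →
      ∀ k : Fin (d+1), (k:ℕ) < (j:ℕ) →
      ρ k j = (fun a : {l : Fin (d+1) // d + 1 ≤ (l:ℕ) + τ} => ρ a.1 k) ⬝ᵥ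
        (((ρ.submatrix (fun a : {l : Fin (d+1) // d + 1 ≤ (l:ℕ) + τ} => a.1)
            (fun a : {l : Fin (d+1) // d + 1 ≤ (l:ℕ) + τ} => a.1))⁻¹) *ᵥ
          (fun a => ρ a.1 j)) by
    exact H (d - (j:ℕ)) j rfl hj1 hj2 k hk
  clear hj1 hj2 hk k j
  intro n
  induction n using Nat.strong_induction_on with
  | _ n IH =>
    intro j hjn hj1 hj2 k hk
    set Tp : Fin (d+1) → Prop := fun l => d + 1 ≤ (l:ℕ) + τ with hTp
    set A := ρ.submatrix (fun a : {l : Fin (d+1) // Tp l} => a.1)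
      (fun a : {l : Fin (d+1) // Tp l} => a.1) with hAdef
    set γ : {l : Fin (d+1) // Tp l} → ℝ := A⁻¹ *ᵥ (fun a => ρ a.1 j) with hγ
    set g : Fin (d+1) → ℝ := fun i => if h : Tp i then γ ⟨i, h⟩ else 0 with hg
    -- the Q-fact: every variable after j has the T-representation of its correlation with j
    have Qfact : ∀ b : Fin (d+1), (j:ℕ) < (b:ℕ) →
        ρ b j = ∑ a : {l : Fin (d+1) // Tp l}, ρ b a.1 * γ a := by
      intro b hb
      by_cases hbT : Tp b
      · have hmul : A *ᵥ γ = fun a => ρ a.1 j := by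
          rw [hγ, Matrix.mulVec_mulVec, Matrix.mul_nonsing_inv _ hAdet, Matrix.one_mulVec]
        have := congrFun hmul ⟨b, hbT⟩
        simp only [Matrix.mulVec, dotProduct, hAdef, Matrix.submatrix_apply] at this
        rw [← this]
      · -- b is a head variable with j < b : use IH at b
        have hb2 : (b:ℕ) + τ ≤ d := by simp [hTp] at hbT; omega
        have hbd : d - (b:ℕ) < n := by omega
        have hIH := IH (d - (b:ℕ)) hbd b rfl (by omega) hb2 j hb
        rw [hs b j, hIH]
        rw [dot_inv_symm hAsymm]
        simp only [dotProduct]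
        exact Finset.sum_congr rfl fun a _ => by rw [hs a.1 b, hγ]
    -- the truncation condition at j
    have htr := htrunc j hj1 hj2 k hk
    set Sp : Fin (d+1) → Prop := fun l => (j:ℕ) < (l:ℕ) with hSp
    set B := ρ.submatrix (fun a : {l : Fin (d+1) // Sp l} => a.1)
      (fun a : {l : Fin (d+1) // Sp l} => a.1) with hBdef
    have hB : B.PosDef := posDef_submatrix' hρ _
    have hTS : ∀ a, Tp a → Sp a := by intro a ha; simp only [hTp] at ha; simp only [hSp]; omega
    have hgz : ∀ a, ¬ Tp a → g a = 0 := fun a ha => by simp [hg, ha]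
    have hgT : ∀ (a : Fin (d+1)) (h : Tp a), g a = γ ⟨a, h⟩ := fun a h => by simp [hg, h]
    -- B *ᵥ (g ∘ val) = ρ_{S,j}
    have hBu : B *ᵥ (fun a : {l : Fin (d+1) // Sp l} => g a.1) =
        (fun a : {l : Fin (d+1) // Sp l} => ρ a.1 j) := by
      funext b
      simp only [Matrix.mulVec, dotProduct, hBdef, Matrix.submatrix_apply]
      rw [sum_subtype_congr hTS (fun i => ρ b.1 i * g i)
        (fun a ha => by simp [hgz a ha])]
      rw [Qfact b.1 b.2]
      exact Finset.sum_congr rfl fun a _ => by rw [hgT a.1 a.2]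
    have hBinv : B⁻¹ *ᵥ (fun a : {l : Fin (d+1) // Sp l} => ρ a.1 j) =
        (fun a : {l : Fin (d+1) // Sp l} => g a.1) := mulVec_cancel hB.det_pos.ne'.isUnit hBu
    rw [htr]
    show (fun a : {l : Fin (d+1) // Sp l} => ρ a.1 k) ⬝ᵥ
        (B⁻¹ *ᵥ (fun a => ρ a.1 j)) = _
    rw [hBinv]
    simp only [dotProduct]
    rw [sum_subtype_congr hTS (fun i => ρ i k * g i)
      (fun a ha => by simp [hgz a ha])]
    exact Finset.sum_congr rfl fun a _ => by rw [hgT a.1 a.2, hγ]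

/-- Let `ρ` be symmetric positive definite with unit diagonal, `j*` an index,
`1 ≤ τ ≤ d+1−j*`, and assume the truncation condition. Let
`β = ρ_{−j*,−j*}⁻¹ ρ_{−j*,j*}`. Then the entries of `β` indexed by variables in
`{1,…,d+1−τ}\{j*}` vanish, and the subvector of `β` indexed by `T = {d+2−τ,…,d+1}` equals
`ρ_{T,T}⁻¹ ρ_{T,j*}`. -/
theorem stmt_5 (d : ℕ) (ρ : Matrix (Fin (d+1)) (Fin (d+1)) ℝ) (hρ : ρ.PosDef)
    (hdiag : ∀ a, ρ a a = 1)
    (j : Fin (d+1)) (τ : ℕ) (hτ1 : 1 ≤ τ) (hτ2 : τ + (j : ℕ) ≤ d)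
    (htrunc : TruncCond d τ ρ) :
    let β : {k : Fin (d+1) // k ≠ j} → ℝ :=
      ((ρ.submatrix (fun k : {k : Fin (d+1) // k ≠ j} => k.1)
          (fun k : {k : Fin (d+1) // k ≠ j} => k.1))⁻¹).mulVec (fun k => ρ k.1 j)
    let γ : {l : Fin (d+1) // d + 1 ≤ (l : ℕ) + τ} → ℝ :=
      ((ρ.submatrix (fun a : {l : Fin (d+1) // d + 1 ≤ (l : ℕ) + τ} => a.1)
          (fun a : {l : Fin (d+1) // d + 1 ≤ (l : ℕ) + τ} => a.1))⁻¹).mulVec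
        (fun a => ρ a.1 j)
    (∀ (k : Fin (d+1)) (hne : k ≠ j), (k : ℕ) + τ ≤ d → β ⟨k, hne⟩ = 0) ∧
      ∀ (k : Fin (d+1)) (hk : d + 1 ≤ (k : ℕ) + τ) (hne : k ≠ j),
        β ⟨k, hne⟩ = γ ⟨k, hk⟩ := by
  intro β γ
  have hs : ∀ a b, ρ a b = ρ b a := by
    intro a b
    conv_lhs => rw [← hρ.1]
    simp [Matrix.conjTranspose_apply]
  have hA : (ρ.submatrix (fun a : {l : Fin (d+1) // d + 1 ≤ (l:ℕ) + τ} => a.1)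
      (fun a : {l : Fin (d+1) // d + 1 ≤ (l:ℕ) + τ} => a.1)).PosDef :=
    posDef_submatrix' hρ _
  have hAdet : IsUnit (ρ.submatrix (fun a : {l : Fin (d+1) // d + 1 ≤ (l:ℕ) + τ} => a.1)
      (fun a : {l : Fin (d+1) // d + 1 ≤ (l:ℕ) + τ} => a.1)).det := hA.det_pos.ne'.isUnit
  have hAsymm : (ρ.submatrix (fun a : {l : Fin (d+1) // d + 1 ≤ (l:ℕ) + τ} => a.1)
      (fun a : {l : Fin (d+1) // d + 1 ≤ (l:ℕ) + τ} => a.1))ᵀ =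
      ρ.submatrix (fun a : {l : Fin (d+1) // d + 1 ≤ (l:ℕ) + τ} => a.1)
        (fun a : {l : Fin (d+1) // d + 1 ≤ (l:ℕ) + τ} => a.1) := by
    ext a b; simp [hs a.1 b.1]
  have hM : (ρ.submatrix (fun k : {k : Fin (d+1) // k ≠ j} => k.1)
      (fun k : {k : Fin (d+1) // k ≠ j} => k.1)).PosDef := posDef_submatrix' hρ _
  have hγ : γ = ((ρ.submatrix (fun a : {l : Fin (d+1) // d + 1 ≤ (l:ℕ) + τ} => a.1)
      (fun a : {l : Fin (d+1) // d + 1 ≤ (l:ℕ) + τ} => a.1))⁻¹) *ᵥ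
      (fun a => ρ a.1 j) := rfl
  set g : Fin (d+1) → ℝ := fun i => if h : d + 1 ≤ (i:ℕ) + τ then γ ⟨i, h⟩ else 0 with hg
  have hgz : ∀ a : Fin (d+1), ¬ (d + 1 ≤ (a:ℕ) + τ) → g a = 0 := fun a ha => by simp only [hg]; rw [dif_neg ha]
  have hgT : ∀ (a : Fin (d+1)) (h : d + 1 ≤ (a:ℕ) + τ), g a = γ ⟨a, h⟩ :=
    fun a h => by simp only [hg]; rw [dif_pos h]
  have key : ∀ b : Fin (d+1), b ≠ j →
      ρ b j = ∑ a : {l : Fin (d+1) // d + 1 ≤ (l:ℕ) + τ}, ρ b a.1 * γ a := by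
    intro b hb
    by_cases hbT : d + 1 ≤ (b:ℕ) + τ
    · have hmul : (ρ.submatrix (fun a : {l : Fin (d+1) // d + 1 ≤ (l:ℕ) + τ} => a.1)
          (fun a : {l : Fin (d+1) // d + 1 ≤ (l:ℕ) + τ} => a.1)) *ᵥ γ =
          fun a : {l : Fin (d+1) // d + 1 ≤ (l:ℕ) + τ} => ρ a.1 j := by
        rw [hγ, Matrix.mulVec_mulVec, Matrix.mul_nonsing_inv _ hAdet, Matrix.one_mulVec]
      have := congrFun hmul ⟨b, hbT⟩
      simp only [Matrix.mulVec, dotProduct, Matrix.submatrix_apply] at this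
      rw [← this]
    · have hb2 : (b:ℕ) + τ ≤ d := by omega
      have hbj : (b:ℕ) ≠ (j:ℕ) := fun h => hb (Fin.ext h)
      rcases lt_or_gt_of_ne hbj with hlt | hgt
      · -- b < j : apply keyL at j with k := b
        have hkey := keyL d τ ρ hρ htrunc j (by omega) (by omega) b hlt
        rw [hkey, ← hγ]
        simp only [dotProduct]
        exact Finset.sum_congr rfl fun a _ => by rw [hs a.1 b]
      · -- j < b : apply keyL at b with k := j
        have hkey := keyL d τ ρ hρ htrunc b (by omega) hb2 j hgt
        rw [hs b j, hkey, dot_inv_symm hAsymm, ← hγ]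
        simp only [dotProduct]
        exact Finset.sum_congr rfl fun a _ => by rw [hs a.1 b]
  have hTN : ∀ a : Fin (d+1), d + 1 ≤ (a:ℕ) + τ → a ≠ j := by
    intro a ha he
    rw [he] at ha; omega
  have hMu : (ρ.submatrix (fun k : {k : Fin (d+1) // k ≠ j} => k.1)
      (fun k : {k : Fin (d+1) // k ≠ j} => k.1)) *ᵥ
      (fun k : {k : Fin (d+1) // k ≠ j} => g k.1) =
      (fun k : {k : Fin (d+1) // k ≠ j} => ρ k.1 j) := by
    funext b
    simp only [Matrix.mulVec, dotProduct, Matrix.submatrix_apply]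
    rw [sum_subtype_congr hTN (fun i => ρ b.1 i * g i)
      (fun a ha => by simp only [hgz a ha, mul_zero])]
    rw [key b.1 b.2]
    exact Finset.sum_congr rfl fun a _ => by rw [hgT a.1 a.2]
  have hβ : β = fun k : {k : Fin (d+1) // k ≠ j} => g k.1 :=
    mulVec_cancel hM.det_pos.ne'.isUnit hMu
  constructor
  · intro k hne hk
    rw [hβ]
    exact hgz k (by omega)
  · intro k hk hne
    rw [hβ]
    exact hgT k hk
end

section
/- Let ρ be a symmetric positive definite real matrix indexed by {1,…,d+1} with unit diagonal, let j* ∈ {1,…,d+1} and let τ be an integer with 1 ≤ τ ≤ d+1−j*. Assume that for every j ∈ {2,…,d+1−τ} and every k ∈ {1,…,j−1}, ρ_{kj} = ρ_{S_j,k}ᵀ ρ_{S_j,S_j}⁻¹ ρ_{S_j,j}, where S_j = {j+1,…,d+1}. Then, with T = {d+2−τ,…,d+1}, the regression residual variance satisfies 1 − ρ_{−j*,j*}ᵀ ρ_{−j*,−j*}⁻¹ ρ_{−j*,j*} = 1 − ρ_{T,j*}ᵀ ρ_{T,T}⁻¹ ρ_{T,j*}. -/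
set_option maxHeartbeats 1000000


open Matrix

lemma aux_inv_mulVec {n : Type*} [Fintype n] [DecidableEq n] {M : Matrix n n ℝ} (hM : M.PosDef)
    {v w : n → ℝ} (h : M *ᵥ w = v) : M⁻¹ *ᵥ v = w := by
  rw [← h, Matrix.mulVec_mulVec,
    Matrix.nonsing_inv_mul M (isUnit_iff_ne_zero.mpr hM.det_pos.ne'), Matrix.one_mulVec]

lemma aux_dot_inv_symm {n : Type*} [Fintype n] [DecidableEq n] {S : Matrix n n ℝ}
    (hS : Sᵀ = S) (v w : n → ℝ) : v ⬝ᵥ S⁻¹ *ᵥ w = w ⬝ᵥ S⁻¹ *ᵥ v := by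
  rw [Matrix.dotProduct_mulVec, ← Matrix.mulVec_transpose, Matrix.transpose_nonsing_inv, hS,
    dotProduct_comm]

lemma aux_posDef_submatrix {n m : Type*} [Fintype n] [Fintype m] [DecidableEq n] [DecidableEq m]
    {M : Matrix n n ℝ} (hM : M.PosDef) {e : m → n} (he : Function.Injective e) :
    (M.submatrix e e).PosDef := by
  refine Matrix.posDef_iff_dotProduct_mulVec.mpr ⟨hM.1.submatrix e, fun x hx => ?_⟩
  set y : n → ℝ := fun i => ∑ k, if e k = i then x k else 0 with hy
  have hyk : ∀ k, y (e k) = x k := by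
    intro k
    simp only [hy, he.eq_iff]
    simp
  have hsum : ∀ g : n → ℝ, ∑ i, y i * g i = ∑ k, x k * g (e k) := by
    intro g
    simp only [hy, Finset.sum_mul, ite_mul, zero_mul]
    rw [Finset.sum_comm]
    refine Finset.sum_congr rfl fun k _ => ?_
    simp
  have hy0 : y ≠ 0 := by
    intro h0
    apply hx
    funext k
    have := hyk k
    rw [h0] at this
    exact this.symm
  have hq : star x ⬝ᵥ (M.submatrix e e) *ᵥ x = star y ⬝ᵥ M *ᵥ y := by
    simp only [star_trivial, dotProduct, Matrix.mulVec, Matrix.submatrix_apply]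
    rw [hsum (fun i => ∑ i', M i i' * y i')]
    refine Finset.sum_congr rfl fun k _ => ?_
    congr 1
    symm
    calc ∑ i', M (e k) i' * y i' = ∑ i', y i' * M (e k) i' := by
          exact Finset.sum_congr rfl fun i' _ => mul_comm _ _
      _ = ∑ k', x k' * M (e k) (e k') := hsum (fun i' => M (e k) i')
      _ = ∑ k', M (e k) (e k') * x k' := Finset.sum_congr rfl fun k' _ => mul_comm _ _
  rw [hq]
  exact hM.dotProduct_mulVec_pos hy0

lemma aux_sum_dite {ι : Type*} [Fintype ι] {p q : ι → Prop} [DecidablePred p] [DecidablePred q]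
    (hqp : ∀ i, q i → p i) (f : ι → ℝ) (g : {i // q i} → ℝ) :
    ∑ k : {i // p i}, f k.1 * (if h : q k.1 then g ⟨k.1, h⟩ else 0)
      = ∑ a : {i // q i}, f a.1 * g a := by
  rw [← Finset.sum_subtype (p := p) (Finset.univ.filter p) (fun x => by simp)
    (fun i => f i * (if h : q i then g ⟨i, h⟩ else 0))]
  have hRR : ∑ a : {i // q i}, f a.1 * g a
      = ∑ i ∈ Finset.univ.filter q, f i * (if h : q i then g ⟨i, h⟩ else 0) := by
    rw [Finset.sum_subtype (p := q) (Finset.univ.filter q) (fun x => by simp)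
      (fun i => f i * (if h : q i then g ⟨i, h⟩ else 0))]
    refine Finset.sum_congr rfl fun a _ => ?_
    rw [dif_pos a.2]
  rw [hRR]
  symm
  refine Finset.sum_subset (fun i hi => ?_) fun i _ hi => ?_
  · simp only [Finset.mem_filter, Finset.mem_univ, true_and] at hi ⊢
    exact hqp i hi
  · have hq : ¬ q i := fun h => hi (by simp [h])
    rw [dif_neg hq, mul_zero]

/-- Let `ρ` be symmetric positive definite with unit diagonal, `j*` an index,
`1 ≤ τ ≤ d+1−j*`, and assume the truncation condition. Then, with `T = {d+2−τ,…,d+1}`,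
`1 − ρ_{−j*,j*}ᵀ ρ_{−j*,−j*}⁻¹ ρ_{−j*,j*} = 1 − ρ_{T,j*}ᵀ ρ_{T,T}⁻¹ ρ_{T,j*}`. -/
theorem stmt_6 (d : ℕ) (ρ : Matrix (Fin (d+1)) (Fin (d+1)) ℝ) (hρ : ρ.PosDef)
    (hdiag : ∀ a, ρ a a = 1)
    (j : Fin (d+1)) (τ : ℕ) (hτ1 : 1 ≤ τ) (hτ2 : τ + (j : ℕ) ≤ d)
    (htrunc : TruncCond d τ ρ) :
    1 - (fun k : {k : Fin (d+1) // k ≠ j} => ρ k.1 j) ⬝ᵥ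
          ((ρ.submatrix (fun k : {k : Fin (d+1) // k ≠ j} => k.1)
              (fun k : {k : Fin (d+1) // k ≠ j} => k.1))⁻¹).mulVec
            (fun k => ρ k.1 j)
      = 1 - (fun a : {l : Fin (d+1) // d + 1 ≤ (l : ℕ) + τ} => ρ a.1 j) ⬝ᵥ
          ((ρ.submatrix (fun a : {l : Fin (d+1) // d + 1 ≤ (l : ℕ) + τ} => a.1)
              (fun a : {l : Fin (d+1) // d + 1 ≤ (l : ℕ) + τ} => a.1))⁻¹).mulVec
            (fun a => ρ a.1 j) := by
  have hsym : ∀ a b, ρ a b = ρ b a := by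
    intro a b
    conv_lhs => rw [← hρ.1]
    simp
  set Tm : Matrix {l : Fin (d+1) // d + 1 ≤ (l : ℕ) + τ} {l : Fin (d+1) // d + 1 ≤ (l : ℕ) + τ} ℝ :=
    ρ.submatrix (fun a : {l : Fin (d+1) // d + 1 ≤ (l : ℕ) + τ} => a.1)
      (fun a : {l : Fin (d+1) // d + 1 ≤ (l : ℕ) + τ} => a.1) with hTmdef
  have hTpd : Tm.PosDef := aux_posDef_submatrix hρ (fun a b h => Subtype.ext h)
  have hTmT : Tmᵀ = Tm := by
    ext a b
    simp only [hTmdef, Matrix.transpose_apply, Matrix.submatrix_apply]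
    exact hsym b.1 a.1
  have hW : ∀ b : Fin (d+1),
      Tm *ᵥ (Tm⁻¹ *ᵥ fun t : {l : Fin (d+1) // d + 1 ≤ (l : ℕ) + τ} => ρ t.1 b)
        = fun t => ρ t.1 b := by
    intro b
    rw [Matrix.mulVec_mulVec,
      Matrix.mul_nonsing_inv _ (isUnit_iff_ne_zero.mpr hTpd.det_pos.ne'), Matrix.one_mulVec]
  have hTmul : ∀ (w : {l : Fin (d+1) // d + 1 ≤ (l : ℕ) + τ} → ℝ) a,
      (Tm *ᵥ w) a = ∑ t, ρ a.1 t.1 * w t := by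
    intro w a
    simp [hTmdef, Matrix.mulVec, dotProduct]
  have key : ∀ n : ℕ, ∀ m : Fin (d+1), (m : ℕ) + τ ≤ d → d - τ - (m : ℕ) ≤ n →
      ∀ k : Fin (d+1), (k : ℕ) < (m : ℕ) →
        ρ k m = (fun t : {l : Fin (d+1) // d + 1 ≤ (l : ℕ) + τ} => ρ t.1 k) ⬝ᵥ
          (Tm⁻¹ *ᵥ fun t => ρ t.1 m) := by
    intro n
    induction n using Nat.strong_induction_on with
    | _ n IH =>
      intro m hm hmn k hk
      have h1m : 1 ≤ (m : ℕ) := by omega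
      have htr := htrunc m h1m hm k hk
      have hSpd : (ρ.submatrix (fun a : {l : Fin (d+1) // (m : ℕ) < (l : ℕ)} => a.1)
          (fun a : {l : Fin (d+1) // (m : ℕ) < (l : ℕ)} => a.1)).PosDef :=
        aux_posDef_submatrix hρ (fun a b h => Subtype.ext h)
      have hqpS : ∀ i : Fin (d+1), d + 1 ≤ (i : ℕ) + τ → (m : ℕ) < (i : ℕ) := by
        intro i hi; omega
      have hu : (ρ.submatrix (fun a : {l : Fin (d+1) // (m : ℕ) < (l : ℕ)} => a.1)
          (fun a : {l : Fin (d+1) // (m : ℕ) < (l : ℕ)} => a.1)) *ᵥ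
          (fun l : {l : Fin (d+1) // (m : ℕ) < (l : ℕ)} =>
            if h : d + 1 ≤ (l.1 : ℕ) + τ then (Tm⁻¹ *ᵥ fun t => ρ t.1 m) ⟨l.1, h⟩ else 0)
          = fun a => ρ a.1 m := by
        funext l
        show ((ρ.submatrix (fun a : {l : Fin (d+1) // (m : ℕ) < (l : ℕ)} => a.1)
            (fun a : {l : Fin (d+1) // (m : ℕ) < (l : ℕ)} => a.1)) *ᵥ
            (fun l : {l : Fin (d+1) // (m : ℕ) < (l : ℕ)} =>
              if h : d + 1 ≤ (l.1 : ℕ) + τ then (Tm⁻¹ *ᵥ fun t => ρ t.1 m) ⟨l.1, h⟩ else 0)) l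
            = ρ l.1 m
        have hentry : ((ρ.submatrix (fun a : {l : Fin (d+1) // (m : ℕ) < (l : ℕ)} => a.1)
            (fun a : {l : Fin (d+1) // (m : ℕ) < (l : ℕ)} => a.1)) *ᵥ
            (fun l : {l : Fin (d+1) // (m : ℕ) < (l : ℕ)} =>
              if h : d + 1 ≤ (l.1 : ℕ) + τ then (Tm⁻¹ *ᵥ fun t => ρ t.1 m) ⟨l.1, h⟩ else 0)) l
            = ∑ t : {l : Fin (d+1) // d + 1 ≤ (l : ℕ) + τ},
                ρ l.1 t.1 * (Tm⁻¹ *ᵥ fun t => ρ t.1 m) t :=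
          aux_sum_dite hqpS (fun i => ρ l.1 i) (Tm⁻¹ *ᵥ fun t => ρ t.1 m)
        rw [hentry]
        by_cases hl : d + 1 ≤ (l.1 : ℕ) + τ
        · have h2 := congrFun (hW m) ⟨l.1, hl⟩
          rw [hTmul _ ⟨l.1, hl⟩] at h2
          exact h2
        · have hlm : (l.1 : ℕ) + τ ≤ d := by omega
          have hml := l.2
          have hlt : d - τ - (l.1 : ℕ) < n := by omega
          have hIH := IH _ hlt l.1 hlm le_rfl m l.2
          rw [aux_dot_inv_symm hTmT] at hIH
          calc ∑ t : {l : Fin (d+1) // d + 1 ≤ (l : ℕ) + τ},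
                ρ l.1 t.1 * (Tm⁻¹ *ᵥ fun t => ρ t.1 m) t
              = (fun t : {l : Fin (d+1) // d + 1 ≤ (l : ℕ) + τ} => ρ t.1 l.1) ⬝ᵥ
                  (Tm⁻¹ *ᵥ fun t => ρ t.1 m) :=
                Finset.sum_congr rfl fun t _ => by rw [hsym l.1 t.1]
            _ = ρ m l.1 := hIH.symm
            _ = ρ l.1 m := hsym _ _
      rw [aux_inv_mulVec hSpd hu] at htr
      rw [htr]
      exact aux_sum_dite hqpS (fun i => ρ i k) (Tm⁻¹ *ᵥ fun t => ρ t.1 m)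
  set Bm : Matrix {k : Fin (d+1) // k ≠ j} {k : Fin (d+1) // k ≠ j} ℝ :=
    ρ.submatrix (fun k : {k : Fin (d+1) // k ≠ j} => k.1)
      (fun k : {k : Fin (d+1) // k ≠ j} => k.1) with hBmdef
  have hBpd : Bm.PosDef := aux_posDef_submatrix hρ (fun a b h => Subtype.ext h)
  have hqpB : ∀ i : Fin (d+1), d + 1 ≤ (i : ℕ) + τ → i ≠ j := by
    intro i hi h
    subst h
    omega
  have hwβ : Bm *ᵥ (fun k : {k : Fin (d+1) // k ≠ j} =>
      if h : d + 1 ≤ (k.1 : ℕ) + τ then (Tm⁻¹ *ᵥ fun t => ρ t.1 j) ⟨k.1, h⟩ else 0)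
      = fun k => ρ k.1 j := by
    funext k
    show (Bm *ᵥ (fun k : {k : Fin (d+1) // k ≠ j} =>
        if h : d + 1 ≤ (k.1 : ℕ) + τ then (Tm⁻¹ *ᵥ fun t => ρ t.1 j) ⟨k.1, h⟩ else 0)) k
        = ρ k.1 j
    have hentry : (Bm *ᵥ (fun k : {k : Fin (d+1) // k ≠ j} =>
        if h : d + 1 ≤ (k.1 : ℕ) + τ then (Tm⁻¹ *ᵥ fun t => ρ t.1 j) ⟨k.1, h⟩ else 0)) k
        = ∑ t : {l : Fin (d+1) // d + 1 ≤ (l : ℕ) + τ},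
            ρ k.1 t.1 * (Tm⁻¹ *ᵥ fun t => ρ t.1 j) t :=
      aux_sum_dite hqpB (fun i => ρ k.1 i) (Tm⁻¹ *ᵥ fun t => ρ t.1 j)
    rw [hentry]
    by_cases hkT : d + 1 ≤ (k.1 : ℕ) + τ
    · have h2 := congrFun (hW j) ⟨k.1, hkT⟩
      rw [hTmul _ ⟨k.1, hkT⟩] at h2
      exact h2
    · have h1 : (k.1 : ℕ) + τ ≤ d := by omega
      have h2 : (j : ℕ) + τ ≤ d := by omega
      have hne : (k.1 : ℕ) ≠ (j : ℕ) := fun h => k.2 (Fin.ext h)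
      rcases lt_or_gt_of_ne hne with hlt | hgt
      · have hkey := key d j h2 (by omega) k.1 hlt
        rw [hkey]
        exact Finset.sum_congr rfl fun t _ => by rw [hsym k.1 t.1]
      · have hkey := key d k.1 h1 (by omega) j hgt
        rw [aux_dot_inv_symm hTmT] at hkey
        calc ∑ t : {l : Fin (d+1) // d + 1 ≤ (l : ℕ) + τ},
              ρ k.1 t.1 * (Tm⁻¹ *ᵥ fun t => ρ t.1 j) t
            = (fun t : {l : Fin (d+1) // d + 1 ≤ (l : ℕ) + τ} => ρ t.1 k.1) ⬝ᵥ
                (Tm⁻¹ *ᵥ fun t => ρ t.1 j) :=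
              Finset.sum_congr rfl fun t _ => by rw [hsym k.1 t.1]
          _ = ρ j k.1 := hkey.symm
          _ = ρ k.1 j := hsym _ _
  rw [aux_inv_mulVec hBpd hwβ]
  congr 1
  exact aux_sum_dite hqpB (fun i => ρ i j) (Tm⁻¹ *ᵥ fun t => ρ t.1 j)
end

section
/- Let ρ be a symmetric positive definite real matrix indexed by {1,…,d+1} with unit diagonal, let j* ∈ {1,…,d+1}, let m be an integer with j* ≤ m ≤ d, and let τ be an integer with 1 ≤ τ ≤ d+1−m. Assume (i) the block structure ρ_{kl} = 0 for all k ≤ m < l ≤ d+1, and (ii) the truncation condition: for every j ∈ {2,…,d+1−τ} and every k ∈ {1,…,j−1}, ρ_{kj} = ρ_{S_j,k}ᵀ ρ_{S_j,S_j}⁻¹ ρ_{S_j,j}, where S_j = {j+1,…,d+1}. Then the regression coefficient vector β = ρ_{−j*,−j*}⁻¹ ρ_{−j*,j*} is the zero vector. -/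
/-!
The leading `m × m` block of `ρ` is diagonal. By downward induction on a column `b < m`, the
vector `ρ_{S_b,b}` vanishes (entries with index `< m` by the induction hypothesis and symmetry,
the others by the block structure), so the truncation condition, which applies because
`b + τ ≤ d`, forces `ρ_{kb} = 0` for all `k < b`. Hence `ρ_{−j*,j*} = 0`, and so is `β`.
-/

open Matrix

variable {d τ m : ℕ} {ρ : Matrix (Fin (d+1)) (Fin (d+1)) ℝ}

theorem TruncCond.apply_eq_zero_of_forall_gt (htrunc : TruncCond d τ ρ) {b : Fin (d+1)}
    (hbτ : (b : ℕ) + τ ≤ d) (hcol : ∀ l, b < l → ρ l b = 0) {k : Fin (d+1)} (hk : k < b) :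
    ρ k b = 0 := by
  have hS : (fun l : {l : Fin (d+1) // (b : ℕ) < (l : ℕ)} => ρ l.1 b) = 0 :=
    funext fun l => hcol l.1 l.2
  rw [htrunc b (by omega) hbτ k hk, hS, mulVec_zero, dotProduct_zero]

theorem TruncCond.apply_eq_zero_of_lt_of_lt (htrunc : TruncCond d τ ρ) (hsymm : ρ.IsSymm)
    (hτm : τ + m ≤ d + 1)
    (hblock : ∀ k l : Fin (d+1), (k : ℕ) < m → m ≤ (l : ℕ) → ρ k l = 0)
    (b : Fin (d+1)) (hbm : (b : ℕ) < m) {a : Fin (d+1)} (hab : a < b) : ρ a b = 0 := by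
  induction b using WellFoundedGT.induction generalizing a with
  | _ b ih =>
    refine htrunc.apply_eq_zero_of_forall_gt (by omega) (fun l hbl => ?_) hab
    rw [hsymm.apply]
    rcases lt_or_ge (l : ℕ) m with hlm | hml
    · exact ih l hbl hlm hbl
    · exact hblock b l hbm hml

theorem TruncCond.apply_eq_zero_of_ne (htrunc : TruncCond d τ ρ) (hsymm : ρ.IsSymm)
    (hτm : τ + m ≤ d + 1)
    (hblock : ∀ k l : Fin (d+1), (k : ℕ) < m → m ≤ (l : ℕ) → ρ k l = 0)
    {j : Fin (d+1)} (hjm : (j : ℕ) < m) {k : Fin (d+1)} (hkj : k ≠ j) : ρ k j = 0 := by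
  rcases lt_or_gt_of_ne hkj with hlt | hgt
  · exact htrunc.apply_eq_zero_of_lt_of_lt hsymm hτm hblock j hjm hlt
  · rw [hsymm.apply]
    rcases lt_or_ge (k : ℕ) m with hkm | hmk
    · exact htrunc.apply_eq_zero_of_lt_of_lt hsymm hτm hblock k hkm hgt
    · exact hblock j k hjm hmk

theorem stmt_7_general (d : ℕ) (ρ : Matrix (Fin (d+1)) (Fin (d+1)) ℝ) (hρ : ρ.PosDef)
    (j : Fin (d+1)) (m : ℕ) (hjm : (j : ℕ) < m)
    (τ : ℕ) (hτ2 : τ + m ≤ d + 1)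
    (hblock : ∀ k l : Fin (d+1), (k : ℕ) < m → m ≤ (l : ℕ) → ρ k l = 0)
    (htrunc : TruncCond d τ ρ) :
    ((ρ.submatrix (fun k : {k : Fin (d+1) // k ≠ j} => k.1)
        (fun k : {k : Fin (d+1) // k ≠ j} => k.1))⁻¹).mulVec
      (fun k => ρ k.1 j) = 0 := by
  have hsymm : ρ.IsSymm := isHermitian_iff_isSymm.mp hρ.isHermitian
  have hcol : (fun k : {k : Fin (d+1) // k ≠ j} => ρ k.1 j) = 0 :=
    funext fun k => htrunc.apply_eq_zero_of_ne hsymm hτ2 hblock hjm k.2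
  rw [hcol, mulVec_zero]

/-- Let `ρ` be symmetric positive definite with unit diagonal, `j*` an index,
`j* ≤ m ≤ d`, `1 ≤ τ ≤ d+1−m`. Assume (i) the block structure `ρ_{kl} = 0` for all
`k ≤ m < l ≤ d+1`, and (ii) the truncation condition. Then the regression coefficient
vector `β = ρ_{−j*,−j*}⁻¹ ρ_{−j*,j*}` is the zero vector. -/
theorem stmt_7 (d : ℕ) (ρ : Matrix (Fin (d+1)) (Fin (d+1)) ℝ) (hρ : ρ.PosDef)
    (hdiag : ∀ a, ρ a a = 1)
    (j : Fin (d+1)) (m : ℕ) (hjm : (j : ℕ) < m) (hmd : m ≤ d)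
    (τ : ℕ) (hτ1 : 1 ≤ τ) (hτ2 : τ + m ≤ d + 1)
    (hblock : ∀ k l : Fin (d+1), (k : ℕ) < m → m ≤ (l : ℕ) → ρ k l = 0)
    (htrunc : TruncCond d τ ρ) :
    ((ρ.submatrix (fun k : {k : Fin (d+1) // k ≠ j} => k.1)
        (fun k : {k : Fin (d+1) // k ≠ j} => k.1))⁻¹).mulVec
      (fun k => ρ k.1 j) = 0 :=
  stmt_7_general d ρ hρ j m hjm τ hτ2 hblock htrunc
end

section
/- Let (Ω, F, P) be a probability space and let V : Ω → ℝ^{d+1} be a random vector whose coordinates V_a are square integrable with E[V_a] = 0 for all a and E[V_a V_b] = ρ_{ab}, where ρ is a symmetric positive definite (d+1)×(d+1) real matrix with unit diagonal. Let j* ∈ {1,…,d+1}, let m be an integer with j* ≤ m ≤ d, and let τ be an integer with 1 ≤ τ ≤ d+1−m. Assume (i) ρ_{kl} = 0 for all k ≤ m < l ≤ d+1, and (ii) for every j ∈ {2,…,d+1−τ} and every k ∈ {1,…,j−1}, ρ_{kj} = ρ_{S_j,k}ᵀ ρ_{S_j,S_j}⁻¹ ρ_{S_j,j}, where S_j = {j+1,…,d+1}.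 Then for every coefficient vector β indexed by {1,…,d+1}\{j*}, E[(V_{j*} − ∑_{k≠j*} β_k V_k)²] ≥ 1, with equality if and only if β = 0; i.e., the unique best linear predictor of the sensitive coordinate V_{j*} from all other coordinates is the zero predictor. -/
open Matrix MeasureTheory

private lemma aux_int_mul {Ω : Type*} [MeasurableSpace Ω] {P : Measure Ω}
    {f g : Ω → ℝ} (hf : MemLp f 2 P) (hg : MemLp g 2 P) :
    Integrable (fun ω => f ω * g ω) P := by
  have h := (((hf.add hg).integrable_sq.sub hf.integrable_sq).sub hg.integrable_sq).div_const 2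
  have he : (fun ω => f ω * g ω) = fun ω => (((f ω + g ω) ^ 2 - f ω ^ 2) - g ω ^ 2) / 2 := by
    ext ω; ring
  rw [he]; exact h

/-- Let `V : Ω → ℝ^{d+1}` be a centered random vector with square-integrable
coordinates and covariance `ρ`, symmetric positive definite with unit diagonal. Let `j*`,
`j* ≤ m ≤ d`, `1 ≤ τ ≤ d+1−m`, and assume (i) the block structure `ρ_{kl} = 0` for
`k ≤ m < l ≤ d+1` and (ii) the truncation condition. Then for every coefficient vector `β`
indexed by the other coordinates, `E[(V_{j*} − ∑_{k≠j*} β_k V_k)²] ≥ 1`, with equality iff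
`β = 0`. -/
theorem stmt_8 (d : ℕ) {Ω : Type*} [MeasurableSpace Ω] (P : Measure Ω)
    [IsProbabilityMeasure P]
    (V : Ω → Fin (d+1) → ℝ) (ρ : Matrix (Fin (d+1)) (Fin (d+1)) ℝ) (hρ : ρ.PosDef)
    (hdiag : ∀ a, ρ a a = 1)
    (hL2 : ∀ a, MemLp (fun ω => V ω a) 2 P)
    (hmean : ∀ a, ∫ ω, V ω a ∂P = 0)
    (hcov : ∀ a b, ∫ ω, V ω a * V ω b ∂P = ρ a b)
    (j : Fin (d+1)) (m : ℕ) (hjm : (j : ℕ) < m) (hmd : m ≤ d)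
    (τ : ℕ) (hτ1 : 1 ≤ τ) (hτ2 : τ + m ≤ d + 1)
    (hblock : ∀ k l : Fin (d+1), (k : ℕ) < m → m ≤ (l : ℕ) → ρ k l = 0)
    (htrunc : TruncCond d τ ρ) :
    ∀ β : {k : Fin (d+1) // k ≠ j} → ℝ,
      (∫ ω, (V ω j - ∑ k : {k : Fin (d+1) // k ≠ j}, β k * V ω k.1) ^ 2 ∂P) ≥ 1 ∧
        ((∫ ω, (V ω j - ∑ k : {k : Fin (d+1) // k ≠ j}, β k * V ω k.1) ^ 2 ∂P) = 1 ↔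
          β = 0) := by
  have hsymm : ∀ a b : Fin (d+1), ρ a b = ρ b a := fun a b => by
    simpa using hρ.1.apply b a
  have hsplit : ∀ g : Fin (d+1) → ℝ, g j = 0 →
      ∑ i, g i = ∑ i : {x : Fin (d+1) // x ≠ j}, g i.1 := by
    intro g hg
    haveI : Subsingleton {x : Fin (d+1) // ¬x ≠ j} :=
      ⟨fun a b => Subtype.ext ((not_not.mp a.2).trans (not_not.mp b.2).symm)⟩
    have h := Fintype.sum_subtype_add_sum_subtype (fun x : Fin (d+1) => x ≠ j) g
    rw [Fintype.sum_subsingleton (fun i : {x : Fin (d+1) // ¬x ≠ j} => g i.1)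
      ⟨j, not_not.mpr rfl⟩] at h
    simp only [hg, add_zero] at h
    exact h.symm
  -- Step 1: all off-diagonal entries in the upper-left block vanish
  have key : ∀ n : ℕ, ∀ b : Fin (d+1), (b : ℕ) < m → m - (b : ℕ) ≤ n →
      ∀ a : Fin (d+1), (a : ℕ) < (b : ℕ) → ρ a b = 0 := by
    intro n
    induction n with
    | zero => intro b hb hnb a _; omega
    | succ n ih =>
      intro b hbm hnb a hab
      have h1 : 1 ≤ (b : ℕ) := by omega
      have h2 : (b : ℕ) + τ ≤ d := by omega
      rw [htrunc b h1 h2 a hab]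
      have hv : (fun l : {l : Fin (d+1) // (b : ℕ) < (l : ℕ)} => ρ l.1 a) = 0 := by
        funext l
        rcases lt_or_ge (l.1 : ℕ) m with hl | hl
        · have : ρ a l.1 = 0 := ih l.1 hl (by omega) a (by omega)
          simp [Pi.zero_apply, hsymm l.1 a, this]
        · have : ρ a l.1 = 0 := hblock a l.1 (by omega) hl
          simp [Pi.zero_apply, hsymm l.1 a, this]
      rw [hv, zero_dotProduct]
  have hzero : ∀ k : Fin (d+1), k ≠ j → ρ j k = 0 := by
    intro k hk
    have hkj : (k : ℕ) ≠ (j : ℕ) := fun h => hk (Fin.ext h)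
    rcases lt_or_gt_of_ne hkj with h | h
    · rw [hsymm]; exact key m j hjm (Nat.sub_le _ _) k h
    · rcases lt_or_ge (k : ℕ) m with hkm | hkm
      · exact key m k hkm (Nat.sub_le _ _) j h
      · exact hblock j k hjm hkm
  intro β
  -- the extended coefficient vector
  set x : Fin (d+1) → ℝ := fun i => if h : i = j then 0 else β ⟨i, h⟩ with hx
  -- quadratic form
  set Q : ℝ := ∑ k : {k : Fin (d+1) // k ≠ j}, ∑ l : {k : Fin (d+1) // k ≠ j},
    β k * β l * ρ k.1 l.1 with hQ
  -- the integral equals 1 + Q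
  have hW : MemLp (fun ω => ∑ k : {k : Fin (d+1) // k ≠ j}, β k * V ω k.1) 2 P := by
    have := memLp_finset_sum (μ := P) (p := 2) Finset.univ
      (f := fun (k : {k : Fin (d+1) // k ≠ j}) (ω : Ω) => β k * V ω k.1)
      (fun k _ => (hL2 k.1).const_mul (β k))
    simpa using this
  have hint : (∫ ω, (V ω j - ∑ k : {k : Fin (d+1) // k ≠ j}, β k * V ω k.1) ^ 2 ∂P)
      = 1 + Q := by
    have h1 : (fun ω => (V ω j - ∑ k : {k : Fin (d+1) // k ≠ j}, β k * V ω k.1) ^ 2)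
        = fun ω => (V ω j) * (V ω j)
          - 2 * ((V ω j) * (∑ k : {k : Fin (d+1) // k ≠ j}, β k * V ω k.1))
          + (∑ k : {k : Fin (d+1) // k ≠ j}, β k * V ω k.1)
            * (∑ k : {k : Fin (d+1) // k ≠ j}, β k * V ω k.1) := by
      funext ω; ring
    rw [h1]
    have i1 : Integrable (fun ω => V ω j * V ω j) P := aux_int_mul (hL2 j) (hL2 j)
    have i2 : Integrable (fun ω =>
        V ω j * ∑ k : {k : Fin (d+1) // k ≠ j}, β k * V ω k.1) P :=
      aux_int_mul (hL2 j) hW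
    have i3 : Integrable (fun ω =>
        (∑ k : {k : Fin (d+1) // k ≠ j}, β k * V ω k.1)
        * ∑ k : {k : Fin (d+1) // k ≠ j}, β k * V ω k.1) P := aux_int_mul hW hW
    have i2' : Integrable (fun ω =>
        2 * (V ω j * ∑ k : {k : Fin (d+1) // k ≠ j}, β k * V ω k.1)) P := i2.const_mul 2
    have i12 : Integrable (fun ω => V ω j * V ω j
        - 2 * (V ω j * ∑ k : {k : Fin (d+1) // k ≠ j}, β k * V ω k.1)) P := i1.sub i2'
    rw [integral_add i12 i3, integral_sub i1 i2', integral_const_mul]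
    have e1 : (∫ ω, V ω j * V ω j ∂P) = 1 := by rw [hcov j j, hdiag j]
    have e2 : (∫ ω, V ω j * ∑ k : {k : Fin (d+1) // k ≠ j}, β k * V ω k.1 ∂P) = 0 := by
      have : (fun ω => V ω j * ∑ k : {k : Fin (d+1) // k ≠ j}, β k * V ω k.1)
          = fun ω => ∑ k : {k : Fin (d+1) // k ≠ j}, β k * (V ω j * V ω k.1) := by
        funext ω; rw [Finset.mul_sum]; congr 1; funext k; ring
      rw [this, integral_finset_sum _
        (fun k _ => (aux_int_mul (hL2 j) (hL2 k.1)).const_mul (β k))]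
      refine Finset.sum_eq_zero fun k _ => ?_
      rw [integral_const_mul, hcov j k.1, hzero k.1 k.2, mul_zero]
    have e3 : (∫ ω, (∑ k : {k : Fin (d+1) // k ≠ j}, β k * V ω k.1)
        * ∑ k : {k : Fin (d+1) // k ≠ j}, β k * V ω k.1 ∂P) = Q := by
      have : (fun ω => (∑ k : {k : Fin (d+1) // k ≠ j}, β k * V ω k.1)
          * ∑ l : {k : Fin (d+1) // k ≠ j}, β l * V ω l.1)
          = fun ω => ∑ k : {k : Fin (d+1) // k ≠ j}, ∑ l : {k : Fin (d+1) // k ≠ j},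
            β k * β l * (V ω k.1 * V ω l.1) := by
        funext ω; rw [Finset.sum_mul_sum]
        refine Finset.sum_congr rfl fun k _ => Finset.sum_congr rfl fun l _ => by ring
      rw [this, integral_finset_sum _ (fun k _ => ?_)]
      · rw [hQ]
        refine Finset.sum_congr rfl fun k _ => ?_
        rw [integral_finset_sum _
          (fun l _ => (aux_int_mul (hL2 k.1) (hL2 l.1)).const_mul (β k * β l))]
        exact Finset.sum_congr rfl fun l _ => by rw [integral_const_mul, hcov k.1 l.1]
      · exact integrable_finset_sum _
          (fun l _ => (aux_int_mul (hL2 k.1) (hL2 l.1)).const_mul (β k * β l))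
    rw [e1, e2, e3]; ring
  -- Q is the quadratic form of ρ at x
  have hxj : x j = 0 := by simp [hx]
  have hxk : ∀ k : {k : Fin (d+1) // k ≠ j}, x k.1 = β k := by
    intro k; simp only [hx, dif_neg k.2]
  have hQx : Q = x ⬝ᵥ ρ.mulVec x := by
    rw [hQ, dotProduct, hsplit (fun i => x i * (ρ.mulVec x) i) (by simp [hxj])]
    refine Finset.sum_congr rfl fun k _ => ?_
    rw [mulVec, dotProduct, hsplit (fun i => ρ k.1 i * x i) (by simp [hxj]),
      Finset.mul_sum]
    refine Finset.sum_congr rfl fun l _ => ?_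
    rw [hxk k, hxk l]; ring
  have hQnonneg : 0 ≤ Q := by
    rw [hQx]
    have := hρ.posSemidef.dotProduct_mulVec_nonneg x
    simpa using this
  constructor
  · rw [hint]; linarith
  · rw [hint]
    constructor
    · intro h
      have hQ0 : Q = 0 := by linarith
      by_contra hβ
      have hx0 : x ≠ 0 := by
        obtain ⟨k, hk⟩ := Function.ne_iff.mp hβ
        intro hc
        apply hk
        have h0 : x k.1 = (0 : Fin (d+1) → ℝ) k.1 := congrFun hc k.1
        rw [hxk k] at h0
        simpa using h0
      have := hρ.dotProduct_mulVec_pos hx0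
      rw [hQx] at hQ0
      simp only [star_trivial] at this
      linarith [hQ0 ▸ this]
    · intro hβ
      have : Q = 0 := by
        rw [hQ]
        refine Finset.sum_eq_zero fun k _ => Finset.sum_eq_zero fun l _ => ?_
        rw [hβ]; simp
      rw [this, add_zero]
end

section
/- Let (Ω, F, P) be a probability space and let V : Ω → ℝ^{d+1} be a random vector whose coordinates V_a are square integrable with E[V_a] = 0 for all a and E[V_a V_b] = ρ_{ab}, where ρ is a symmetric positive definite (d+1)×(d+1) real matrix with unit diagonal. Let j* ∈ {1,…,d+1} and let τ be an integer with 1 ≤ τ ≤ d+1−j*. Assume that for every j ∈ {2,…,d+1−τ} and every k ∈ {1,…,j−1}, ρ_{kj} = ρ_{S_j,k}ᵀ ρ_{S_j,S_j}⁻¹ ρ_{S_j,j}, where S_j = {j+1,…,d+1}. Let T = {d+2−τ,…,d+1}. Then the unique minimizer β of E[(V_{j*} − ∑_{k≠j*} β_k V_k)²] over all coefficient vectors indexed by {1,…,d+1}\{j*} vanishes outside T, its restriction to T equals the unique minimizer γ = ρ_{T,T}⁻¹ρ_{T,j*} of E[(V_{j*} − ∑_{k∈T} γ_k V_k)²] over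 coefficient vectors indexed by T, and the two minimal values coincide and equal 1 − ρ_{T,j*}ᵀ ρ_{T,T}⁻¹ ρ_{T,j*}. -/
open Matrix MeasureTheory

set_option linter.unusedSectionVars false

section Aux

variable {n : Type*} [Fintype n] [DecidableEq n]

lemma myPosdef_nonneg {A : Matrix n n ℝ} (hA : A.PosDef) (x : n → ℝ) :
    0 ≤ x ⬝ᵥ A.mulVec x := by
  rcases eq_or_ne x 0 with h | h
  · simp [h]
  · have h2 := hA.dotProduct_mulVec_pos h
    rw [star_trivial] at h2
    exact le_of_lt h2

lemma myPosdef_pos {A : Matrix n n ℝ} (hA : A.PosDef) (x : n → ℝ) (hx : x ≠ 0) :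
    0 < x ⬝ᵥ A.mulVec x := by
  have h2 := hA.dotProduct_mulVec_pos hx
  rwa [star_trivial] at h2

lemma myDot_swap {A : Matrix n n ℝ} (hA : A.IsHermitian) (x y : n → ℝ) :
    x ⬝ᵥ A.mulVec y = y ⬝ᵥ A.mulVec x := by
  have ht : ∀ i j, A i j = A j i := fun i j => by
    simpa using (hA.apply i j).symm
  simp only [dotProduct, Matrix.mulVec, Finset.mul_sum]
  rw [Finset.sum_comm]
  refine Finset.sum_congr rfl fun i _ => Finset.sum_congr rfl fun k _ => ?_
  rw [ht k i]
  ring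

lemma myQuad_key {A : Matrix n n ℝ} (hA : A.IsHermitian) {b xs : n → ℝ}
    (hxs : A.mulVec xs = b) (c : ℝ) (x : n → ℝ) :
    c - 2 * (x ⬝ᵥ b) + x ⬝ᵥ A.mulVec x
      = (c - 2 * (xs ⬝ᵥ b) + xs ⬝ᵥ A.mulVec xs) + (x - xs) ⬝ᵥ A.mulVec (x - xs) := by
  have e1 : (x - xs) ⬝ᵥ A.mulVec (x - xs)
      = x ⬝ᵥ A.mulVec x - x ⬝ᵥ A.mulVec xs - xs ⬝ᵥ A.mulVec x + xs ⬝ᵥ A.mulVec xs := by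
    rw [Matrix.mulVec_sub, dotProduct_sub, sub_dotProduct, sub_dotProduct]
    ring
  rw [e1, ← hxs, myDot_swap hA x xs]
  ring

lemma mySum_of_support {N : Type*} [Fintype N] (p : N → Prop) [DecidablePred p] (g : N → ℝ)
    (h : ∀ l, ¬ p l → g l = 0) : ∑ l : {l // p l}, g l.1 = ∑ l, g l := by
  classical
  rw [(Finset.sum_subtype _ (fun x => by simp) g : ∑ x ∈ Finset.univ.filter p, g x = _).symm]
  exact Finset.sum_filter_of_ne (fun x _ hx => by by_contra hp; exact hx (h x hp))

lemma myDot_mulVec_eq (A : Matrix n n ℝ) (x : n → ℝ) :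
    x ⬝ᵥ A.mulVec x = ∑ i, ∑ i', x i * x i' * A i i' := by
  simp only [dotProduct, Matrix.mulVec, Finset.mul_sum]
  exact Finset.sum_congr rfl fun i _ => Finset.sum_congr rfl fun i' _ => by ring

lemma myPosDef_submatrix {N M : Type*} [Fintype N] [Fintype M] [DecidableEq N] [DecidableEq M]
    {A : Matrix N N ℝ} (hA : A.PosDef) (e : M → N) (he : Function.Injective e) :
    (A.submatrix e e).PosDef := by
  classical
  refine Matrix.PosDef.of_dotProduct_mulVec_pos (hA.1.submatrix e) fun x hx => ?_
  set y : N → ℝ := fun i => ∑ a : M, if e a = i then x a else 0 with hy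
  have key : ∀ g : N → ℝ, (∑ i, y i * g i) = ∑ a, x a * g (e a) := by
    intro g
    simp only [hy, Finset.sum_mul, ite_mul, zero_mul]
    rw [Finset.sum_comm]
    simp
  have key2 : ∀ i, A.mulVec y i = ∑ b, A i (e b) * x b := by
    intro i
    have h1 : A.mulVec y i = ∑ jj, y jj * A i jj := dotProduct_comm (A i) y
    rw [h1, key (A i)]
    exact Finset.sum_congr rfl fun b _ => mul_comm _ _
  have hval : y ⬝ᵥ A.mulVec y = x ⬝ᵥ (A.submatrix e e).mulVec x := by
    rw [show y ⬝ᵥ A.mulVec y = ∑ a, x a * A.mulVec y (e a) from key _]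
    simp only [key2]
    simp only [dotProduct, Matrix.mulVec, Matrix.submatrix_apply, Finset.mul_sum]
  have hy0 : y ≠ 0 := by
    obtain ⟨a, ha⟩ := Function.ne_iff.mp hx
    intro h0
    apply ha
    have hval2 : y (e a) = x a := by
      simp only [hy]
      rw [Finset.sum_eq_single a]
      · simp
      · intro b _ hb
        simp only [ite_eq_right_iff]
        intro hba; exact absurd (he hba) hb
      · intro h; exact absurd (Finset.mem_univ a) h
    rw [h0] at hval2
    simpa using hval2.symm
  have h2 := hA.dotProduct_mulVec_pos hy0
  rw [star_trivial] at h2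
  rw [star_trivial]
  rw [← hval]
  exact h2

end Aux

lemma myExpand_int {d : ℕ} {Ω : Type*} [MeasurableSpace Ω] (P : Measure Ω)
    [IsProbabilityMeasure P]
    (V : Ω → Fin (d+1) → ℝ) (ρ : Matrix (Fin (d+1)) (Fin (d+1)) ℝ)
    (hL2 : ∀ a, MemLp (fun ω => V ω a) 2 P)
    (hcov : ∀ a b, ∫ ω, V ω a * V ω b ∂P = ρ a b)
    (j : Fin (d+1)) {ι : Type*} [Fintype ι] (e : ι → Fin (d+1)) (c : ι → ℝ) :
    ∫ ω, (V ω j - ∑ i, c i * V ω (e i)) ^ 2 ∂P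
      = ρ j j - 2 * (∑ i, c i * ρ j (e i)) + ∑ i, ∑ i', c i * c i' * ρ (e i) (e i') := by
  classical
  have hint : ∀ a b, Integrable (fun ω => V ω a * V ω b) P := by
    intro a b
    have h := (hL2 b).smul (hL2 a) (p := 2) (q := 2) (r := 1)
    rw [memLp_one_iff_integrable] at h
    simpa [smul_eq_mul, Pi.mul_def] using h
  have h1 : ∀ ω : Ω, (V ω j - ∑ i, c i * V ω (e i)) ^ 2
      = V ω j * V ω j - 2 * (∑ i, c i * (V ω j * V ω (e i)))
        + ∑ i, ∑ i', c i * c i' * (V ω (e i) * V ω (e i')) := by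
    intro ω
    have e2 : (∑ i, c i * V ω (e i)) * (∑ i', c i' * V ω (e i'))
        = ∑ i, ∑ i', c i * c i' * (V ω (e i) * V ω (e i')) := by
      rw [Finset.sum_mul_sum]
      exact Finset.sum_congr rfl fun i _ => Finset.sum_congr rfl fun i' _ => by ring
    have e3 : V ω j * (∑ i, c i * V ω (e i)) = ∑ i, c i * (V ω j * V ω (e i)) := by
      rw [Finset.mul_sum]
      exact Finset.sum_congr rfl fun i _ => by ring
    calc (V ω j - ∑ i, c i * V ω (e i)) ^ 2
        = V ω j * V ω j - 2 * (V ω j * (∑ i, c i * V ω (e i)))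
          + (∑ i, c i * V ω (e i)) * (∑ i', c i' * V ω (e i')) := by ring
      _ = _ := by rw [e2, e3]
  simp only [h1]
  have I2 : Integrable (fun ω => ∑ i, c i * (V ω j * V ω (e i))) P :=
    integrable_finset_sum _ fun i _ => (hint j (e i)).const_mul _
  have I3 : Integrable (fun ω => ∑ i, ∑ i', c i * c i' * (V ω (e i) * V ω (e i'))) P :=
    integrable_finset_sum _ fun i _ =>
      integrable_finset_sum _ fun i' _ => (hint (e i) (e i')).const_mul _
  have I12 : Integrable (fun ω => V ω j * V ω j
      - 2 * ∑ i, c i * (V ω j * V ω (e i))) P := (hint j j).sub (I2.const_mul 2)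
  rw [integral_add I12 I3,
    integral_sub (hint j j) (I2.const_mul 2), integral_const_mul,
    integral_finset_sum _ (fun i _ => (hint j (e i)).const_mul _),
    integral_finset_sum _ (fun i _ =>
      integrable_finset_sum _ fun i' _ => (hint (e i) (e i')).const_mul _),
    hcov j j]
  congr 1
  · congr 2
    exact Finset.sum_congr rfl fun i _ => by rw [integral_const_mul, hcov]
  · refine Finset.sum_congr rfl fun i _ => ?_
    rw [integral_finset_sum _ (fun i' _ => (hint (e i) (e i')).const_mul _)]
    exact Finset.sum_congr rfl fun i' _ => by rw [integral_const_mul, hcov]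

lemma myProj_eq (d : ℕ) (ρ : Matrix (Fin (d+1)) (Fin (d+1)) ℝ) (hρ : ρ.PosDef)
    (j : Fin (d+1)) (w : Fin (d+1) → ℝ) (m : ℕ)
    (hsupp : ∀ l : Fin (d+1), (l : ℕ) ≤ m → w l = 0)
    (hnorm : ∀ k : Fin (d+1), m < (k : ℕ) → ∑ l, ρ k l * w l = ρ k j) :
    ((ρ.submatrix (fun a : {l : Fin (d+1) // m < (l : ℕ)} => a.1)
        (fun a : {l : Fin (d+1) // m < (l : ℕ)} => a.1))⁻¹).mulVec
      (fun a : {l : Fin (d+1) // m < (l : ℕ)} => ρ a.1 j)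
      = fun a : {l : Fin (d+1) // m < (l : ℕ)} => w a.1 := by
  classical
  set A := ρ.submatrix (fun a : {l : Fin (d+1) // m < (l : ℕ)} => a.1)
    (fun a : {l : Fin (d+1) // m < (l : ℕ)} => a.1) with hA
  have hApd : A.PosDef := myPosDef_submatrix hρ _ Subtype.val_injective
  have hAw : A.mulVec (fun a => w a.1) = fun a : {l : Fin (d+1) // m < (l : ℕ)} => ρ a.1 j := by
    funext a
    have h1 : A.mulVec (fun a => w a.1) a
        = ∑ b : {l : Fin (d+1) // m < (l : ℕ)}, ρ a.1 b.1 * w b.1 := rfl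
    rw [h1, mySum_of_support (fun l : Fin (d+1) => m < (l : ℕ)) (fun l => ρ a.1 l * w l)
      (fun l hl => by show ρ a.1 l * w l = 0; rw [hsupp l (Nat.le_of_not_lt hl), mul_zero])]
    exact hnorm a.1 a.2
  rw [← hAw, Matrix.mulVec_mulVec, Matrix.nonsing_inv_mul A hApd.det_pos.ne'.isUnit,
    Matrix.one_mulVec]

lemma myKey_lemma (d τ : ℕ) (ρ : Matrix (Fin (d+1)) (Fin (d+1)) ℝ) (hρ : ρ.PosDef)
    (j : Fin (d+1)) (hτ2 : τ + (j : ℕ) ≤ d) (htrunc : TruncCond d τ ρ)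
    (w : Fin (d+1) → ℝ) (hsupp : ∀ l : Fin (d+1), (l : ℕ) + τ ≤ d → w l = 0)
    (hT : ∀ k : Fin (d+1), d + 1 ≤ (k : ℕ) + τ → ∑ l, ρ k l * w l = ρ k j) :
    ∀ k : Fin (d+1), k ≠ j → ∑ l, ρ k l * w l = ρ k j := by
  classical
  have htd : τ ≤ d := le_trans (Nat.le_add_right τ (j : ℕ)) hτ2
  have hsymm : ∀ a b, ρ a b = ρ b a := fun a b => by simpa using (hρ.1.apply a b).symm
  have dot_to_sum : ∀ (m : ℕ) (u : Fin (d+1) → ℝ),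
      (∀ l : Fin (d+1), (l : ℕ) ≤ m → w l = 0) →
      ((fun a : {l : Fin (d+1) // m < (l : ℕ)} => u a.1) ⬝ᵥ
        fun a : {l : Fin (d+1) // m < (l : ℕ)} => w a.1) = ∑ l, u l * w l := by
    intro m u hs
    have h1 : ((fun a : {l : Fin (d+1) // m < (l : ℕ)} => u a.1) ⬝ᵥ
        fun a : {l : Fin (d+1) // m < (l : ℕ)} => w a.1)
        = ∑ a : {l : Fin (d+1) // m < (l : ℕ)}, u a.1 * w a.1 := rfl
    rw [h1]
    exact mySum_of_support (fun l : Fin (d+1) => m < (l : ℕ)) (fun l => u l * w l)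
      (fun l hl => by show u l * w l = 0; rw [hs l (Nat.le_of_not_lt hl), mul_zero])
  have main : ∀ n : ℕ, n ≤ d - τ - (j : ℕ) →
      ∀ k : Fin (d+1), d - τ - n < (k : ℕ) → ∑ l, ρ k l * w l = ρ k j := by
    intro n
    induction n with
    | zero => exact fun _ k hk => hT k (by omega)
    | succ n ih =>
      intro hn k hk
      by_cases hk' : d - τ - n < (k : ℕ)
      · exact ih (by omega) k hk'
      · have hkv : (k : ℕ) = d - τ - n := by omega
        have hherm : ((ρ.submatrix (fun a : {l : Fin (d+1) // (k : ℕ) < (l : ℕ)} => a.1)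
            (fun a : {l : Fin (d+1) // (k : ℕ) < (l : ℕ)} => a.1))⁻¹).IsHermitian :=
          (hρ.1.submatrix _).inv
        have hjk := htrunc k (by omega) (by omega) j (by omega)
        rw [myDot_swap hherm, myProj_eq d ρ hρ j w (k : ℕ)
            (fun l hl => hsupp l (by omega))
            (fun k' hk'' => ih (by omega) k' (by omega)),
          dot_to_sum (k : ℕ) (fun l => ρ l k) (fun l hl => hsupp l (by omega))] at hjk
        rw [show (∑ l, ρ l k * w l) = ∑ l, ρ k l * w l from
          Finset.sum_congr rfl fun l _ => by rw [hsymm l k]] at hjk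
        rw [← hjk]
        exact hsymm j k
  intro k hk
  rcases lt_trichotomy (k : ℕ) (j : ℕ) with hlt | heq | hgt
  · have hkj := htrunc j (by omega) (by omega) k hlt
    rw [myProj_eq d ρ hρ j w (j : ℕ)
        (fun l hl => hsupp l (by omega))
        (fun k' hk'' => main (d - τ - (j : ℕ)) le_rfl k' (by omega)),
      dot_to_sum (j : ℕ) (fun l => ρ l k) (fun l hl => hsupp l (by omega))] at hkj
    rw [show (∑ l, ρ l k * w l) = ∑ l, ρ k l * w l from
      Finset.sum_congr rfl fun l _ => by rw [hsymm l k]] at hkj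
    exact hkj.symm
  · exact absurd (Fin.ext heq) hk
  · exact main (d - τ - (j : ℕ)) le_rfl k (by omega)

/-- Let `V : Ω → ℝ^{d+1}` be a centered random vector with square-integrable
coordinates and covariance `ρ`, symmetric positive definite with unit diagonal. Let `j*`,
`1 ≤ τ ≤ d+1−j*`, and assume the truncation condition. Let `T = {d+2−τ,…,d+1}`. Then the
unique minimizer `β` of `E[(V_{j*} − ∑_{k≠j*} β_k V_k)²]` vanishes outside `T`, its
restriction to `T` equals the unique minimizer `γ = ρ_{T,T}⁻¹ρ_{T,j*}` of
`E[(V_{j*} − ∑_{k∈T} γ_k V_k)²]`, and the two minimal values coincide and equal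
`1 − ρ_{T,j*}ᵀ ρ_{T,T}⁻¹ ρ_{T,j*}`. -/
theorem stmt_9 (d : ℕ) {Ω : Type*} [MeasurableSpace Ω] (P : Measure Ω)
    [IsProbabilityMeasure P]
    (V : Ω → Fin (d+1) → ℝ) (ρ : Matrix (Fin (d+1)) (Fin (d+1)) ℝ) (hρ : ρ.PosDef)
    (hdiag : ∀ a, ρ a a = 1)
    (hL2 : ∀ a, MemLp (fun ω => V ω a) 2 P)
    (hmean : ∀ a, ∫ ω, V ω a ∂P = 0)
    (hcov : ∀ a b, ∫ ω, V ω a * V ω b ∂P = ρ a b)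
    (j : Fin (d+1)) (τ : ℕ) (hτ1 : 1 ≤ τ) (hτ2 : τ + (j : ℕ) ≤ d)
    (htrunc : TruncCond d τ ρ) :
    let obj : ({k : Fin (d+1) // k ≠ j} → ℝ) → ℝ := fun β =>
      ∫ ω, (V ω j - ∑ k : {k : Fin (d+1) // k ≠ j}, β k * V ω k.1) ^ 2 ∂P
    let objT : ({l : Fin (d+1) // d + 1 ≤ (l : ℕ) + τ} → ℝ) → ℝ := fun γ =>
      ∫ ω, (V ω j - ∑ l : {l : Fin (d+1) // d + 1 ≤ (l : ℕ) + τ}, γ l * V ω l.1) ^ 2 ∂P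
    let ρTT : Matrix {l : Fin (d+1) // d + 1 ≤ (l : ℕ) + τ}
        {l : Fin (d+1) // d + 1 ≤ (l : ℕ) + τ} ℝ :=
      ρ.submatrix (fun a => a.1) (fun a => a.1)
    let ρTj : {l : Fin (d+1) // d + 1 ≤ (l : ℕ) + τ} → ℝ := fun a => ρ a.1 j
    ∃ β : {k : Fin (d+1) // k ≠ j} → ℝ,
      (∀ β', obj β ≤ obj β') ∧ (∀ β', obj β' = obj β → β' = β) ∧
      (∀ (k : Fin (d+1)) (hne : k ≠ j), (k : ℕ) + τ ≤ d → β ⟨k, hne⟩ = 0) ∧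
      ∃ γ : {l : Fin (d+1) // d + 1 ≤ (l : ℕ) + τ} → ℝ,
        γ = ρTT⁻¹.mulVec ρTj ∧
        (∀ γ', objT γ ≤ objT γ') ∧ (∀ γ', objT γ' = objT γ → γ' = γ) ∧
        (∀ (k : Fin (d+1)) (hk : d + 1 ≤ (k : ℕ) + τ) (hne : k ≠ j),
          β ⟨k, hne⟩ = γ ⟨k, hk⟩) ∧
        obj β = objT γ ∧
        obj β = 1 - ρTj ⬝ᵥ ρTT⁻¹.mulVec ρTj := by
  classical
  intro obj objT ρTT ρTj
  have htd : τ ≤ d := le_trans (Nat.le_add_right τ (j : ℕ)) hτ2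
  have hsymm : ∀ a b, ρ a b = ρ b a := fun a b => by simpa using (hρ.1.apply a b).symm
  have hTTpd : ρTT.PosDef := myPosDef_submatrix hρ _ Subtype.val_injective
  have hKpd : (ρ.submatrix (fun a : {k : Fin (d+1) // k ≠ j} => a.1)
      (fun a : {k : Fin (d+1) // k ≠ j} => a.1)).PosDef :=
    myPosDef_submatrix hρ _ Subtype.val_injective
  set AK := ρ.submatrix (fun a : {k : Fin (d+1) // k ≠ j} => a.1)
      (fun a : {k : Fin (d+1) // k ≠ j} => a.1) with hAKdef
  have hγeq : ρTT.mulVec (ρTT⁻¹.mulVec ρTj) = ρTj := by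
    rw [Matrix.mulVec_mulVec, Matrix.mul_nonsing_inv _ hTTpd.det_pos.ne'.isUnit,
      Matrix.one_mulVec]
  set γ : {l : Fin (d+1) // d + 1 ≤ (l : ℕ) + τ} → ℝ := ρTT⁻¹.mulVec ρTj with hγdef
  set w : Fin (d+1) → ℝ := fun l => if h : d + 1 ≤ (l : ℕ) + τ then γ ⟨l, h⟩ else 0 with hwdef
  have hwsupp : ∀ l : Fin (d+1), (l : ℕ) + τ ≤ d → w l = 0 := fun l hl => dif_neg (by omega)
  have hwT : ∀ (l : Fin (d+1)) (h : d + 1 ≤ (l : ℕ) + τ), w l = γ ⟨l, h⟩ := fun l h => dif_pos h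
  have hwT' : ∀ l : Fin (d+1), ¬ (d + 1 ≤ (l : ℕ) + τ) → w l = 0 := fun l h => dif_neg h
  have hwj : w j = 0 := hwsupp j (by omega)
  have hT : ∀ k : Fin (d+1), d + 1 ≤ (k : ℕ) + τ → ∑ l, ρ k l * w l = ρ k j := by
    intro k hk
    rw [← mySum_of_support (fun l : Fin (d+1) => d + 1 ≤ (l : ℕ) + τ) (fun l => ρ k l * w l)
      (fun l hl => by show ρ k l * w l = 0; rw [hwT' l hl, mul_zero])]
    have h2 : (∑ a : {l : Fin (d+1) // d + 1 ≤ (l : ℕ) + τ}, ρ k a.1 * w a.1)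
        = ρTT.mulVec γ ⟨k, hk⟩ := by
      refine Finset.sum_congr rfl fun a _ => ?_
      show ρ k a.1 * w a.1 = ρTT ⟨k, hk⟩ a * γ a
      rw [hwT a.1 a.2]
      rfl
    rw [h2, hγeq]
  set β : {k : Fin (d+1) // k ≠ j} → ℝ := fun k => w k.1 with hβdef
  have hAKβ : AK.mulVec β = fun k : {k : Fin (d+1) // k ≠ j} => ρ k.1 j := by
    funext k
    have h1 : AK.mulVec β k = ∑ b : {k : Fin (d+1) // k ≠ j}, ρ k.1 b.1 * w b.1 := rfl
    rw [h1, mySum_of_support (fun l : Fin (d+1) => l ≠ j) (fun l => ρ k.1 l * w l)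
      (fun l hl => by
        show ρ k.1 l * w l = 0
        rw [not_not.mp hl, hwj, mul_zero])]
    exact myKey_lemma d τ ρ hρ j hτ2 htrunc w hwsupp hT k.1 k.2
  have hobj : ∀ x : {k : Fin (d+1) // k ≠ j} → ℝ,
      obj x = 1 - 2 * (x ⬝ᵥ fun k : {k : Fin (d+1) // k ≠ j} => ρ k.1 j)
        + x ⬝ᵥ AK.mulVec x := by
    intro x
    have h0 : obj x
        = ∫ ω, (V ω j - ∑ i : {k : Fin (d+1) // k ≠ j}, x i * V ω i.1) ^ 2 ∂P := rfl
    rw [h0, myExpand_int P V ρ hL2 hcov j (fun i : {k : Fin (d+1) // k ≠ j} => i.1) x, hdiag j]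
    have e1 : (∑ i : {k : Fin (d+1) // k ≠ j}, x i * ρ j i.1)
        = x ⬝ᵥ fun k : {k : Fin (d+1) // k ≠ j} => ρ k.1 j := by
      refine Finset.sum_congr rfl fun i _ => ?_
      show x i * ρ j i.1 = x i * ρ i.1 j
      rw [hsymm j i.1]
    have e2 : (∑ i : {k : Fin (d+1) // k ≠ j}, ∑ i' : {k : Fin (d+1) // k ≠ j},
        x i * x i' * ρ i.1 i'.1) = x ⬝ᵥ AK.mulVec x := (myDot_mulVec_eq AK x).symm
    rw [e1, e2]
  have hobjT : ∀ x : {l : Fin (d+1) // d + 1 ≤ (l : ℕ) + τ} → ℝ,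
      objT x = 1 - 2 * (x ⬝ᵥ ρTj) + x ⬝ᵥ ρTT.mulVec x := by
    intro x
    have h0 : objT x
        = ∫ ω, (V ω j - ∑ i : {l : Fin (d+1) // d + 1 ≤ (l : ℕ) + τ}, x i * V ω i.1) ^ 2 ∂P := rfl
    rw [h0, myExpand_int P V ρ hL2 hcov j
      (fun i : {l : Fin (d+1) // d + 1 ≤ (l : ℕ) + τ} => i.1) x, hdiag j]
    have e1 : (∑ i : {l : Fin (d+1) // d + 1 ≤ (l : ℕ) + τ}, x i * ρ j i.1) = x ⬝ᵥ ρTj := by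
      refine Finset.sum_congr rfl fun i _ => ?_
      show x i * ρ j i.1 = x i * ρ i.1 j
      rw [hsymm j i.1]
    have e2 : (∑ i : {l : Fin (d+1) // d + 1 ≤ (l : ℕ) + τ},
        ∑ i' : {l : Fin (d+1) // d + 1 ≤ (l : ℕ) + τ}, x i * x i' * ρ i.1 i'.1)
        = x ⬝ᵥ ρTT.mulVec x := (myDot_mulVec_eq ρTT x).symm
    rw [e1, e2]
  have hquadK : ∀ x, obj x = obj β + (x - β) ⬝ᵥ AK.mulVec (x - β) := by
    intro x
    rw [hobj x, hobj β, myQuad_key hKpd.1 hAKβ 1 x]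
  have hquadT : ∀ x, objT x = objT γ + (x - γ) ⬝ᵥ ρTT.mulVec (x - γ) := by
    intro x
    rw [hobjT x, hobjT γ, myQuad_key hTTpd.1 hγeq 1 x]
  have hvalK : obj β = 1 - (β ⬝ᵥ fun k : {k : Fin (d+1) // k ≠ j} => ρ k.1 j) := by
    rw [hobj β]
    have h1 : β ⬝ᵥ AK.mulVec β = β ⬝ᵥ fun k : {k : Fin (d+1) // k ≠ j} => ρ k.1 j := by
      rw [hAKβ]
    rw [h1]; ring
  have hvalT : objT γ = 1 - (γ ⬝ᵥ ρTj) := by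
    rw [hobjT γ]
    have h1 : γ ⬝ᵥ ρTT.mulVec γ = γ ⬝ᵥ ρTj := by rw [hγeq]
    rw [h1]; ring
  have hdots : (β ⬝ᵥ fun k : {k : Fin (d+1) // k ≠ j} => ρ k.1 j) = γ ⬝ᵥ ρTj := by
    have h1 : (β ⬝ᵥ fun k : {k : Fin (d+1) // k ≠ j} => ρ k.1 j) = ∑ l, w l * ρ l j := by
      have h0 : (β ⬝ᵥ fun k : {k : Fin (d+1) // k ≠ j} => ρ k.1 j)
          = ∑ a : {k : Fin (d+1) // k ≠ j}, w a.1 * ρ a.1 j := rfl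
      rw [h0]
      exact mySum_of_support (fun l : Fin (d+1) => l ≠ j) (fun l => w l * ρ l j)
        (fun l hl => by show w l * ρ l j = 0; rw [not_not.mp hl, hwj, zero_mul])
    have h2 : γ ⬝ᵥ ρTj = ∑ l, w l * ρ l j := by
      have h3 : γ ⬝ᵥ ρTj = ∑ a : {l : Fin (d+1) // d + 1 ≤ (l : ℕ) + τ}, w a.1 * ρ a.1 j := by
        refine Finset.sum_congr rfl fun a _ => ?_
        show γ a * ρ a.1 j = w a.1 * ρ a.1 j
        rw [hwT a.1 a.2]
      rw [h3]
      exact mySum_of_support (fun l : Fin (d+1) => d + 1 ≤ (l : ℕ) + τ) (fun l => w l * ρ l j)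
        (fun l hl => by show w l * ρ l j = 0; rw [hwT' l hl, zero_mul])
    rw [h1, h2]
  have hfin : (ρTj ⬝ᵥ ρTT⁻¹.mulVec ρTj) = γ ⬝ᵥ ρTj := dotProduct_comm _ _
  refine ⟨β, ?_, ?_, ?_, γ, hγdef, ?_, ?_, ?_, ?_, ?_⟩
  · intro β'
    rw [hquadK β']
    exact le_add_of_nonneg_right (myPosdef_nonneg hKpd _)
  · intro β' h
    rw [hquadK β'] at h
    have h0 : (β' - β) ⬝ᵥ AK.mulVec (β' - β) = 0 := by linarith
    by_contra hne
    exact absurd h0 (ne_of_gt (myPosdef_pos hKpd _ (sub_ne_zero.mpr hne)))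
  · intro k hne hk
    show w k = 0
    exact hwsupp k hk
  · intro γ'
    rw [hquadT γ']
    exact le_add_of_nonneg_right (myPosdef_nonneg hTTpd _)
  · intro γ' h
    rw [hquadT γ'] at h
    have h0 : (γ' - γ) ⬝ᵥ ρTT.mulVec (γ' - γ) = 0 := by linarith
    by_contra hne
    exact absurd h0 (ne_of_gt (myPosdef_pos hTTpd _ (sub_ne_zero.mpr hne)))
  · intro k hk hne
    show w k = γ ⟨k, hk⟩
    exact hwT k hk
  · rw [hvalK, hvalT, hdots]
  · rw [hvalK, hdots, ← hfin]
end
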